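/- arXiv:1901.11432 — 4 statements merged into one kernel-verified Lean document; each statement's English description precedes it below -/
import Mathlib

section
/- Let I ⊆ ℝ be a nonempty open interval, let b ∈ (0, ∞], and set D_b = {z ∈ ℂ : 0 < Im z < b} and L = {x + i·0 : x ∈ I}. Let F : D_b ∪ L → ℂ be a continuous function such that the restriction of F to D_b is analytic (complex differentiable). If F vanishes identically on L, then F vanishes identically on D_b ∪ L. -/
/-!
Schwarz reflection: on the symmetric rectangle `(a, c) × (-r, r)`, with `ofReal r < b`, the
function equal to `F` on the closed upper half and to `conj ∘ F ∘ conj` below is continuous,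
because `F` vanishes on the real axis, and holomorphic off the axis. By Morera's theorem it is
holomorphic on the whole rectangle, since every rectangle cut along the axis splits into two on
whose interiors it is holomorphic. It vanishes on a real interval, hence on the rectangle by the
identity theorem; so `F` vanishes on an open subset of the connected strip `D`, and again by the
identity theorem on all of `D`.
-/

open Complex Set Filter Topology
open scoped Interval ComplexConjugate

section Morera

variable {E : Type*} [NormedAddCommGroup E] [NormedSpace ℂ E] {f : ℂ → E} {U : Set ℂ}

theorem wedgeIntegral_add_wedgeIntegral_split {z w : ℂ} (hc : ContinuousOn f (Rectangle z w))
    {t : ℝ} (ht : t ∈ [[z.im, w.im]]) :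
    wedgeIntegral z w f + wedgeIntegral w z f =
      (wedgeIntegral z (w.re + t * I) f + wedgeIntegral (w.re + t * I) z f) +
      (wedgeIntegral (z.re + t * I) w f + wedgeIntegral w (z.re + t * I) f) := by
  have vertical (x : ℝ) (hx : x ∈ [[z.re, w.re]]) :
      (∫ y : ℝ in z.im..t, f (x + y * I)) + (∫ y : ℝ in t..w.im, f (x + y * I)) =
        ∫ y : ℝ in z.im..w.im, f (x + y * I) := by
    have hint : IntervalIntegrable (fun y : ℝ ↦ f (x + y * I)) MeasureTheory.volume z.im w.im :=
      (hc.comp (by fun_prop) fun y hy ↦ ⟨by simpa using hx, by simpa using hy⟩).intervalIntegrable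
    exact intervalIntegral.integral_add_adjacent_intervals
      (hint.mono_set (uIcc_subset_uIcc_left ht)) (hint.mono_set (uIcc_subset_uIcc_right ht))
  have hl := vertical z.re left_mem_uIcc
  have hr := vertical w.re right_mem_uIcc
  simp only [wedgeIntegral_add_wedgeIntegral_eq, add_re, add_im, ofReal_re, ofReal_im,
    re_ofReal_mul, im_ofReal_mul, I_re, I_im, mul_zero, mul_one, add_zero, zero_add]
  rw [← hl, ← hr, smul_add, smul_add]
  abel

theorem wedgeIntegral_add_wedgeIntegral_eq_zero_of_zero_notMem (hU : IsOpen U)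
    (hc : ContinuousOn f U) (hd : DifferentiableOn ℂ f (U ∩ {z | z.im ≠ 0})) {z w : ℂ}
    (hzw : Rectangle z w ⊆ U) (h0 : (0 : ℝ) ∉ Ioo (min z.im w.im) (max z.im w.im)) :
    wedgeIntegral z w f + wedgeIntegral w z f = 0 := by
  rw [wedgeIntegral_add_wedgeIntegral_eq]
  refine integral_boundary_rect_eq_zero_of_differentiable_on_off_countable f z w ∅
    countable_empty (hc.mono hzw) fun x hx ↦ ?_
  have hxU : x ∈ U := hzw ⟨Ioo_subset_Icc_self hx.1.1, Ioo_subset_Icc_self hx.1.2⟩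
  have hx0 : x.im ≠ 0 := fun h ↦ h0 (h ▸ hx.1.2)
  exact hd.differentiableAt <|
    (hU.inter (isOpen_ne_fun continuous_im continuous_const)).mem_nhds ⟨hxU, hx0⟩

theorem differentiableOn_of_differentiableOn_im_ne_zero [CompleteSpace E] (hU : IsOpen U)
    (hc : ContinuousOn f U) (hd : DifferentiableOn ℂ f (U ∩ {z | z.im ≠ 0})) :
    DifferentiableOn ℂ f U := by
  refine (isConservativeOn_and_continuousOn_iff_isDifferentiableOn hU).1 ⟨fun z w hzw ↦ ?_, hc⟩
  rw [← add_eq_zero_iff_eq_neg]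
  -- Cut along the real axis: each half meets it only on its boundary, where continuity suffices.
  by_cases h0 : (0 : ℝ) ∈ [[z.im, w.im]]
  · have endpoint (y : ℝ) :
        (0 : ℝ) ∉ Ioo (min y 0) (max y 0) ∧ (0 : ℝ) ∉ Ioo (min 0 y) (max 0 y) := by
      rcases le_total y 0 with h | h <;> simp [h]
    rw [wedgeIntegral_add_wedgeIntegral_split (hc.mono hzw) h0]
    have hsub₁ : Rectangle z (w.re + (0 : ℝ) * I) ⊆ U := by
      refine subset_trans ?_ hzw
      simpa [Rectangle] using
        reProdIm_subset_iff.2 (prod_mono subset_rfl (uIcc_subset_uIcc_left h0))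
    have hsub₂ : Rectangle (z.re + (0 : ℝ) * I) w ⊆ U := by
      refine subset_trans ?_ hzw
      simpa [Rectangle] using
        reProdIm_subset_iff.2 (prod_mono subset_rfl (uIcc_subset_uIcc_right h0))
    rw [wedgeIntegral_add_wedgeIntegral_eq_zero_of_zero_notMem hU hc hd hsub₁
        (by simpa using (endpoint z.im).1),
      wedgeIntegral_add_wedgeIntegral_eq_zero_of_zero_notMem hU hc hd hsub₂
        (by simpa using (endpoint w.im).2), add_zero]
  · exact wedgeIntegral_add_wedgeIntegral_eq_zero_of_zero_notMem hU hc hd hzw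
      fun h ↦ h0 (Ioo_subset_Icc_self h)

end Morera

section Reflection

variable {F : ℂ → ℂ} {U : Set ℂ}

noncomputable def schwarzReflection (F : ℂ → ℂ) (z : ℂ) : ℂ :=
  if 0 ≤ z.im then F z else conj (F (conj z))

theorem schwarzReflection_of_nonneg {z : ℂ} (hz : 0 ≤ z.im) : schwarzReflection F z = F z :=
  if_pos hz

theorem schwarzReflection_of_neg {z : ℂ} (hz : z.im < 0) :
    schwarzReflection F z = conj (F (conj z)) :=
  if_neg hz.not_ge

theorem continuousOn_schwarzReflection (hUconj : ∀ z ∈ U, conj z ∈ U)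
    (hc : ContinuousOn F (U ∩ {z | 0 ≤ z.im})) (hreal : ∀ z ∈ U, z.im = 0 → conj (F z) = F z) :
    ContinuousOn (schwarzReflection F) U := by
  have hclosure : closure {z : ℂ | ¬0 ≤ z.im} = {z | z.im ≤ 0} := by
    simpa only [not_le] using closure_setOfPred_im_lt 0
  refine ContinuousOn.if (fun z hz ↦ ?_) ?_ ?_
  · rw [frontier_setOfPred_le_im] at hz
    rw [conj_eq_iff_im.2 hz.2, hreal z hz.1 hz.2]
  · rw [closure_le_eq continuous_const continuous_im]
    exact hc
  · rw [hclosure]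
    refine continuous_conj.comp_continuousOn (hc.comp continuous_conj.continuousOn fun z hz ↦ ?_)
    exact ⟨hUconj z hz.1, by simpa using hz.2⟩

theorem differentiableOn_schwarzReflection_of_im_ne_zero (hU : IsOpen U)
    (hUconj : ∀ z ∈ U, conj z ∈ U) (hd : DifferentiableOn ℂ F (U ∩ {z | 0 < z.im})) :
    DifferentiableOn ℂ (schwarzReflection F) (U ∩ {z | z.im ≠ 0}) := by
  rintro z ⟨hzU, hz0⟩
  refine DifferentiableAt.differentiableWithinAt ?_
  rcases hz0.lt_or_gt with hneg | hpos
  · have : DifferentiableAt ℂ F (conj z) := hd.differentiableAt <|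
      (hU.inter (isOpen_lt continuous_const continuous_im)).mem_nhds
        ⟨hUconj z hzU, by simpa using hneg⟩
    refine (conj_conj z ▸ this.conj_conj).congr_of_eventuallyEq ?_
    filter_upwards [(isOpen_lt continuous_im continuous_const).mem_nhds hneg] with w hw
    exact schwarzReflection_of_neg hw
  · have : DifferentiableAt ℂ F z := hd.differentiableAt <|
      (hU.inter (isOpen_lt continuous_const continuous_im)).mem_nhds ⟨hzU, hpos⟩
    refine this.congr_of_eventuallyEq ?_
    filter_upwards [(isOpen_lt continuous_const continuous_im).mem_nhds hpos] with w hw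
    exact schwarzReflection_of_nonneg hw.le

theorem differentiableOn_schwarzReflection (hU : IsOpen U) (hUconj : ∀ z ∈ U, conj z ∈ U)
    (hc : ContinuousOn F (U ∩ {z | 0 ≤ z.im})) (hd : DifferentiableOn ℂ F (U ∩ {z | 0 < z.im}))
    (hreal : ∀ z ∈ U, z.im = 0 → conj (F z) = F z) :
    DifferentiableOn ℂ (schwarzReflection F) U :=
  differentiableOn_of_differentiableOn_im_ne_zero hU
    (continuousOn_schwarzReflection hUconj hc hreal)
    (differentiableOn_schwarzReflection_of_im_ne_zero hU hUconj hd)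

end Reflection

theorem frequently_eq_zero_of_eq_zero_on_real_nhds {E : Type*} [Zero E] {f : ℂ → E}
    {s : Set ℝ} {x : ℝ} (hs : s ∈ 𝓝 x) (hf : ∀ t ∈ s, f t = 0) :
    ∃ᶠ z in 𝓝[≠] (x : ℂ), f z = 0 := by
  have hofReal : Tendsto ofReal (𝓝[≠] x) (𝓝[≠] (x : ℂ)) :=
    continuous_ofReal.continuousWithinAt.tendsto_nhdsWithin fun t ht ↦ ofReal_injective.ne ht
  exact hofReal.frequently
    (eventually_nhdsWithin_of_eventually_nhds (mem_of_superset hs hf)).frequently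

theorem isOpen_setOf_im_pos_ofReal_im_lt (b : ENNReal) :
    IsOpen {z : ℂ | 0 < z.im ∧ ENNReal.ofReal z.im < b} :=
  (isOpen_lt continuous_const continuous_im).inter
    (isOpen_lt (ENNReal.continuous_ofReal.comp continuous_im) continuous_const)

theorem convex_setOf_im_pos_ofReal_im_lt (b : ENNReal) :
    Convex ℝ {z : ℂ | 0 < z.im ∧ ENNReal.ofReal z.im < b} :=
  ((convex_Ioi 0).inter ordConnected_Iio.preimage_ennreal_ofReal.convex).linear_preimage imLm

theorem eqOn_zero_of_eq_zero_on_real_interval {a c r : ℝ} (hac : a < c) (hr : 0 < r)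
    {F : ℂ → ℂ} (hc : ContinuousOn F (Ioo a c ×ℂ Ico 0 r))
    (hd : DifferentiableOn ℂ F (Ioo a c ×ℂ Ioo 0 r)) (h0 : ∀ t ∈ Ioo a c, F t = 0) :
    EqOn F 0 (Ioo a c ×ℂ Ico 0 r) := by
  set U := Ioo a c ×ℂ Ioo (-r) r
  have hUopen : IsOpen U := isOpen_Ioo.reProdIm isOpen_Ioo
  have hUconj : ∀ z ∈ U, conj z ∈ U := fun z hz ↦
    ⟨hz.1, by simpa [and_comm, neg_lt] using hz.2⟩
  have hUreal : ∀ z ∈ U, z.im = 0 → F z = 0 := fun z hz hz0 ↦ by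
    rw [← re_add_im z, hz0, ofReal_zero, zero_mul, add_zero]
    exact h0 z.re hz.1
  have hG : DifferentiableOn ℂ (schwarzReflection F) U :=
    differentiableOn_schwarzReflection hUopen hUconj
      (hc.mono fun z hz ↦ ⟨hz.1.1, hz.2, hz.1.2.2⟩) (hd.mono fun z hz ↦ ⟨hz.1.1, hz.2, hz.1.2.2⟩)
      fun z hz hz0 ↦ by rw [hUreal z hz hz0, map_zero]
  have hmid : (a + c) / 2 ∈ Ioo a c := ⟨by linarith, by linarith⟩
  have hUconv : Convex ℝ U :=
    ((convex_Ioo a c).linear_preimage reLm).inter ((convex_Ioo (-r) r).linear_preimage imLm)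
  have hGU : EqOn (schwarzReflection F) 0 U :=
    (hG.analyticOnNhd hUopen).eqOn_zero_of_preconnected_of_frequently_eq_zero
      hUconv.isPreconnected ⟨hmid, by simpa using hr⟩
      (frequently_eq_zero_of_eq_zero_on_real_nhds (isOpen_Ioo.mem_nhds hmid) fun t ht ↦ by
        rw [schwarzReflection_of_nonneg (ofReal_im t).ge, h0 t ht])
  intro z hz
  rw [← schwarzReflection_of_nonneg (F := F) hz.2.1]
  exact hGU ⟨hz.1, by linarith [hz.2.1], hz.2.2⟩

/-- **Uniqueness from boundary vanishing on a strip.**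
Let `I = (a, c)` be a nonempty open interval, `b ∈ (0, ∞]`, and let
`D_b = {z : 0 < Im z < b}` and `L = {x + i·0 : x ∈ I}`. If `F` is continuous on
`D_b ∪ L`, analytic on `D_b`, and vanishes identically on `L`, then `F ≡ 0` on `D_b ∪ L`. -/
theorem strip_vanishing_on_boundary_interval
    (a c : ℝ) (hac : a < c) (b : ENNReal) (hb : 0 < b)
    (D L : Set ℂ)
    (hD : D = {z : ℂ | 0 < z.im ∧ ENNReal.ofReal z.im < b})
    (hL : L = {z : ℂ | z.im = 0 ∧ z.re ∈ Set.Ioo a c})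
    (F : ℂ → ℂ)
    (hF_cont : ContinuousOn F (D ∪ L))
    (hF_anal : DifferentiableOn ℂ F D)
    (hF_zero : ∀ z ∈ L, F z = 0) :
    ∀ z ∈ D ∪ L, F z = 0 := by
  obtain ⟨r, -, hr0, hrb⟩ := ENNReal.lt_iff_exists_real_btwn.1 hb
  have hr : 0 < r := ENNReal.ofReal_pos.1 hr0
  have hRD : Ioo a c ×ℂ Ioo 0 r ⊆ D := fun z hz ↦
    hD ▸ ⟨hz.2.1, (ENNReal.ofReal_lt_ofReal_iff hr).2 hz.2.2 |>.trans hrb⟩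
  have hRL : Ioo a c ×ℂ Ico 0 r ⊆ D ∪ L := fun z hz ↦ by
    rcases hz.2.1.lt_or_eq with h | h
    exacts [Or.inl (hRD ⟨hz.1, h, hz.2.2⟩), Or.inr (hL ▸ ⟨h.symm, hz.1⟩)]
  have hR : EqOn F 0 (Ioo a c ×ℂ Ico 0 r) :=
    eqOn_zero_of_eq_zero_on_real_interval hac hr (hF_cont.mono hRL) (hF_anal.mono hRD)
      fun t ht ↦ hF_zero t (hL ▸ ⟨ofReal_im t, ht⟩)
  have hz : (((a + c) / 2 : ℝ) : ℂ) + (r / 2 : ℝ) * I ∈ Ioo a c ×ℂ Ioo 0 r :=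
    ⟨by simpa using (⟨by linarith, by linarith⟩ : (a + c) / 2 ∈ Ioo a c), by simp [hr]⟩
  have hFD : EqOn F 0 D := by
    refine (hF_anal.analyticOnNhd (hD ▸ isOpen_setOf_im_pos_ofReal_im_lt b)
      ).eqOn_zero_of_preconnected_of_eventuallyEq_zero
      (hD ▸ convex_setOf_im_pos_ofReal_im_lt b).isPreconnected (hRD hz) ?_
    filter_upwards [(isOpen_Ioo.reProdIm isOpen_Ioo).mem_nhds hz] with w hw
    exact hR ⟨hw.1, hw.2.1.le, hw.2.2⟩
  rintro z (hz | hz)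
  exacts [hFD hz, hF_zero z hz]
end

section
/- Let J ⊆ [-π, π] be a nonempty open interval, let B₁(0) = {z ∈ ℂ : |z| < 1} be the open unit disk, and let A = {z ∈ ℂ : |z| = 1, arg(z) ∈ J} be the corresponding open arc of the unit circle. Let F : B₁(0) ∪ A → ℂ be a continuous function such that the restriction of F to B₁(0) is analytic (complex differentiable). If F vanishes identically on A, then F vanishes identically on B₁(0) ∪ A. -/
/-!
Extend `F` by zero outside the closed unit disk. Because `F` vanishes on the arc, the extension `G`
is continuous on the union `U` of the open disk and the open sector spanned by the arc, and it is
holomorphic off the unit circle. By Morera's theorem a continuous function that is holomorphic off a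
line is holomorphic; transported along `u ↦ z₀ exp (i u)`, which maps the real line onto the
circle, this makes `G` holomorphic on the connected open set `U`. As `G` vanishes outside the disk,
the identity theorem gives `G ≡ 0` on `U`, hence `F ≡ 0` on the disk.
-/

open Complex Set Metric Topology intervalIntegral Interval
open scoped Real

namespace Complex

section

variable {E : Type*} [NormedAddCommGroup E] [NormedSpace ℂ E]

/-- The expression shown to vanish by
`Complex.integral_boundary_rect_eq_zero_of_continuousOn_of_differentiableOn`. -/
noncomputable def rectangleBoundaryIntegral (f : ℂ → E) (z w : ℂ) : E :=
  (∫ x : ℝ in z.re..w.re, f (x + z.im * I)) - (∫ x : ℝ in z.re..w.re, f (x + w.im * I)) +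
    I • (∫ y : ℝ in z.im..w.im, f (w.re + y * I)) - I • (∫ y : ℝ in z.im..w.im, f (z.re + y * I))

theorem rectangleBoundaryIntegral_eq_add {f : ℂ → E} {z w : ℂ}
    (hf : ContinuousOn f (Rectangle z w)) {c : ℝ} (hc : c ∈ [[z.im, w.im]]) :
    rectangleBoundaryIntegral f z w =
      rectangleBoundaryIntegral f z ⟨w.re, c⟩ + rectangleBoundaryIntegral f ⟨z.re, c⟩ w := by
  have vertical : ∀ x ∈ [[z.re, w.re]], ∀ y₁ ∈ [[z.im, w.im]], ∀ y₂ ∈ [[z.im, w.im]],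
      IntervalIntegrable (fun y : ℝ ↦ f (x + y * I)) MeasureTheory.volume y₁ y₂ := by
    intro x hx y₁ hy₁ y₂ hy₂
    refine (hf.comp (by fun_prop) fun y hy ↦ ?_).intervalIntegrable
    exact ⟨by simpa using hx, by simpa using uIcc_subset_uIcc hy₁ hy₂ hy⟩
  simp only [rectangleBoundaryIntegral]
  rw [← integral_add_adjacent_intervals (vertical w.re right_mem_uIcc _ left_mem_uIcc _ hc)
      (vertical w.re right_mem_uIcc _ hc _ right_mem_uIcc),
    ← integral_add_adjacent_intervals (vertical z.re left_mem_uIcc _ left_mem_uIcc _ hc)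
      (vertical z.re left_mem_uIcc _ hc _ right_mem_uIcc)]
  simp only [smul_add]
  abel

theorem rectangleBoundaryIntegral_eq_zero_of_differentiableAt_off_real {f : ℂ → E} {z w : ℂ}
    (hc : ContinuousOn f (Rectangle z w))
    (hd : ∀ u ∈ Rectangle z w, u.im ≠ 0 → DifferentiableAt ℂ f u) :
    rectangleBoundaryIntegral f z w = 0 := by
  have of_avoids : ∀ z' w', Rectangle z' w' ⊆ Rectangle z w →
      (0 : ℝ) ∉ Ioo (min z'.im w'.im) (max z'.im w'.im) →
      rectangleBoundaryIntegral f z' w' = 0 := by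
    intro z' w' hsub h0
    refine integral_boundary_rect_eq_zero_of_continuousOn_of_differentiableOn f z' w'
      (hc.mono hsub) fun u hu ↦ (hd u (hsub ?_) fun him ↦ h0 (him ▸ hu.2)).differentiableWithinAt
    exact ⟨Ioo_subset_Icc_self hu.1, Ioo_subset_Icc_self hu.2⟩
  have endpoint : ∀ y : ℝ,
      (0 : ℝ) ∉ Ioo (min y 0) (max y 0) ∧ (0 : ℝ) ∉ Ioo (min 0 y) (max 0 y) := by
    intro y
    constructor <;> rintro ⟨h₁, h₂⟩ <;> simp only [min_lt_iff, lt_max_iff] at h₁ h₂ <;> grind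
  -- A rectangle crossing the real axis is cut along it; each half meets the axis only on its edge.
  by_cases h0 : (0 : ℝ) ∈ Ioo (min z.im w.im) (max z.im w.im)
  · have h0' : (0 : ℝ) ∈ [[z.im, w.im]] := Ioo_subset_Icc_self h0
    rw [rectangleBoundaryIntegral_eq_add hc h0', of_avoids, of_avoids, add_zero]
    · exact fun u hu ↦ ⟨hu.1, uIcc_subset_uIcc h0' right_mem_uIcc hu.2⟩
    · exact (endpoint w.im).2
    · exact fun u hu ↦ ⟨hu.1, uIcc_subset_uIcc left_mem_uIcc h0' hu.2⟩
    · exact (endpoint z.im).1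
  · exact of_avoids z w subset_rfl h0

theorem isConservativeOn_of_differentiableAt_off_real {f : ℂ → E} {U : Set ℂ}
    (hc : ContinuousOn f U) (hd : ∀ u ∈ U, u.im ≠ 0 → DifferentiableAt ℂ f u) :
    IsConservativeOn f U := fun z w hzw ↦ by
  rw [← add_eq_zero_iff_eq_neg, wedgeIntegral_add_wedgeIntegral_eq]
  exact rectangleBoundaryIntegral_eq_zero_of_differentiableAt_off_real (hc.mono hzw)
    fun u hu ↦ hd u (hzw hu)

theorem differentiableOn_of_differentiableAt_off_real [CompleteSpace E] {f : ℂ → E} {U : Set ℂ}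
    (hU : IsOpen U) (hc : ContinuousOn f U) (hd : ∀ u ∈ U, u.im ≠ 0 → DifferentiableAt ℂ f u) :
    DifferentiableOn ℂ f U :=
  (isConservativeOn_and_continuousOn_iff_isDifferentiableOn hU).1
    ⟨isConservativeOn_of_differentiableAt_off_real hc hd, hc⟩

theorem differentiableOn_of_differentiableAt_off_unit_circle [CompleteSpace E] {f : ℂ → E}
    {U : Set ℂ} (hU : IsOpen U) (hc : ContinuousOn f U)
    (hd : ∀ z ∈ U, ‖z‖ ≠ 1 → DifferentiableAt ℂ f z) :
    DifferentiableOn ℂ f U := by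
  intro z₀ hz₀
  by_cases hz₀_norm : ‖z₀‖ ≠ 1
  · exact (hd z₀ hz₀ hz₀_norm).differentiableWithinAt
  rw [not_not] at hz₀_norm
  have hz₀_ne : z₀ ≠ 0 := by rintro rfl; simp at hz₀_norm
  -- `e` maps the real line onto the unit circle, and `L` is a local inverse of `e` at `z₀`.
  set e : ℂ → ℂ := fun u ↦ z₀ * exp (u * I)
  set L : ℂ → ℂ := fun z ↦ -I * log (z / z₀)
  have he : Differentiable ℂ e := by fun_prop
  have norm_e : ∀ u, ‖e u‖ = Real.exp (-u.im) := by simp [e, norm_exp, hz₀_norm]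
  have e_L : ∀ z, z ≠ 0 → e (L z) = z := fun z hz ↦ by
    simp only [e, L, mul_right_comm _ _ I, neg_mul, I_mul_I, neg_neg, one_mul,
      exp_log (div_ne_zero hz hz₀_ne), mul_div_cancel₀ _ hz₀_ne]
  have hL : DifferentiableAt ℂ L z₀ :=
    ((differentiableAt_id.div_const z₀).clog (by simp [hz₀_ne])).const_mul _
  have hV : IsOpen (e ⁻¹' U) := hU.preimage he.continuous
  have hfe : DifferentiableOn ℂ (f ∘ e) (e ⁻¹' U) :=
    differentiableOn_of_differentiableAt_off_real hV (hc.comp he.continuous.continuousOn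
      (mapsTo_preimage e U)) fun u hu him ↦ (hd _ hu (by simpa [norm_e] using him)).comp u (he u)
  have hL₀ : L z₀ ∈ e ⁻¹' U := by simpa [L, e, hz₀_ne] using hz₀
  refine ((hfe.differentiableAt (hV.mem_nhds hL₀)).comp z₀ hL).congr_of_eventuallyEq ?_
    |>.differentiableWithinAt
  filter_upwards [eventually_ne_nhds hz₀_ne] with z hz
  simp [e_L z hz]

end

theorem continuousOn_ball_piecewise_zero {E : Type*} [TopologicalSpace E] [Zero E]
    [DecidablePred (· ∈ ball (0 : ℂ) 1)] {F : ℂ → E}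
    {V : Set ℂ} (hF_cont : ContinuousOn F (ball 0 1 ∪ V ∩ sphere 0 1))
    (hF_zero : ∀ z ∈ V ∩ sphere 0 1, F z = 0) :
    ContinuousOn ((ball (0 : ℂ) 1).piecewise F 0) (ball 0 1 ∪ V) := by
  refine ContinuousOn.piecewise (fun z hz ↦ ?_) (hF_cont.mono ?_) continuousOn_const
  · obtain ⟨hz, hz_sphere⟩ := hz
    rw [frontier_ball 0 one_ne_zero] at hz_sphere
    exact hF_zero z ⟨hz.resolve_left (sphere_disjoint_ball.notMem_of_mem_left hz_sphere),
      hz_sphere⟩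
  · rw [closure_ball 0 one_ne_zero]
    rintro z ⟨hz | hz, hz_le⟩
    · exact Or.inl hz
    · rcases (mem_closedBall_zero_iff.1 hz_le).lt_or_eq with h | h
      · exact Or.inl (mem_ball_zero_iff.2 h)
      · exact Or.inr ⟨hz, mem_sphere_zero_iff_norm.2 h⟩

theorem eqOn_zero_ball_of_eq_zero_on_sphere_inter {E : Type*} [NormedAddCommGroup E]
    [NormedSpace ℂ E] [CompleteSpace E] {F : ℂ → E} {V : Set ℂ}
    (hV : IsOpen V) (hconn : IsPreconnected (ball 0 1 ∪ V)) (hout : ∃ z ∈ V, 1 < ‖z‖)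
    (hF_cont : ContinuousOn F (ball 0 1 ∪ V ∩ sphere 0 1))
    (hF_diff : DifferentiableOn ℂ F (ball 0 1)) (hF_zero : ∀ z ∈ V ∩ sphere 0 1, F z = 0) :
    EqOn F 0 (ball 0 1) := by
  classical
  set G := (ball (0 : ℂ) 1).piecewise F 0
  have hU : IsOpen (ball 0 1 ∪ V) := isOpen_ball.union hV
  have hG_ball : ∀ z ∈ ball (0 : ℂ) 1, G =ᶠ[𝓝 z] F := fun z hz ↦ by
    filter_upwards [isOpen_ball.mem_nhds hz] with w hw using piecewise_eq_of_mem _ _ _ hw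
  have hG_out : ∀ z : ℂ, 1 < ‖z‖ → G =ᶠ[𝓝 z] 0 := fun z hz ↦ by
    filter_upwards [(isOpen_lt continuous_const continuous_norm).mem_nhds hz] with w hw
    exact piecewise_eq_of_notMem _ _ _ (by simpa using hw.le)
  have hG_diff : DifferentiableOn ℂ G (ball 0 1 ∪ V) := by
    refine differentiableOn_of_differentiableAt_off_unit_circle hU
      (continuousOn_ball_piecewise_zero hF_cont hF_zero) fun z _ hz ↦ ?_
    rcases hz.lt_or_gt with hz | hz
    · have hz_ball : z ∈ ball (0 : ℂ) 1 := mem_ball_zero_iff.2 hz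
      exact (hF_diff.differentiableAt (isOpen_ball.mem_nhds hz_ball)).congr_of_eventuallyEq
        (hG_ball z hz_ball)
    · exact (differentiableAt_const 0).congr_of_eventuallyEq (hG_out z hz)
  obtain ⟨z₁, hz₁V, hz₁⟩ := hout
  have hG_zero : EqOn G 0 (ball 0 1 ∪ V) :=
    (hG_diff.analyticOnNhd hU).eqOn_zero_of_preconnected_of_eventuallyEq_zero hconn
      (Or.inr hz₁V) (hG_out z₁ hz₁)
  intro z hz
  simpa [G, hz] using hG_zero (Or.inl hz)

theorem starConvex_ball_union_slitPlane_inter_arg_preimage (s : Set ℝ) :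
    StarConvex ℝ 0 (ball (0 : ℂ) 1 ∪ slitPlane ∩ arg ⁻¹' s) := by
  intro z hz t u ht hu htu
  rw [smul_zero, zero_add]
  rcases hu.eq_or_lt with rfl | hu
  · simp
  rcases hz with hz | ⟨hz_slit, hz_arg⟩
  · rw [mem_ball_zero_iff] at hz
    refine Or.inl (mem_ball_zero_iff.2 ?_)
    rw [norm_smul, Real.norm_of_nonneg hu.le]
    nlinarith [norm_nonneg z]
  · have harg : arg (u • z) = arg z := by rw [real_smul, arg_real_mul z hu]
    rw [mem_slitPlane_iff_arg] at hz_slit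
    exact Or.inr ⟨mem_slitPlane_iff_arg.2 ⟨harg ▸ hz_slit.1, smul_ne_zero hu.ne' hz_slit.2⟩,
      mem_preimage.2 (harg ▸ hz_arg)⟩

theorem exists_mem_slitPlane_inter_arg_preimage_one_lt_norm {s : Set ℝ} {θ : ℝ} (hθ : θ ∈ s)
    (hθ_pi : θ ∈ Ioo (-π) π) : ∃ z ∈ slitPlane ∩ arg ⁻¹' s, 1 < ‖z‖ := by
  have harg : arg ((2 : ℝ) * (cos θ + sin θ * I)) = θ :=
    arg_mul_cos_add_sin_mul_I two_pos (Ioo_subset_Ioc_self hθ_pi)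
  have hnorm : ‖(2 : ℝ) * (cos θ + sin θ * I)‖ = 2 := by
    rw [norm_mul, norm_cos_add_sin_mul_I]; norm_num
  refine ⟨(2 : ℝ) * (cos θ + sin θ * I), ⟨mem_slitPlane_iff_arg.2 ⟨?_, ?_⟩, ?_⟩, ?_⟩
  · rw [harg]; exact hθ_pi.2.ne
  · exact norm_ne_zero_iff.1 (by rw [hnorm]; norm_num)
  · rwa [mem_preimage, harg]
  · rw [hnorm]; norm_num

end Complex

/-- **Uniqueness in the disk from vanishing on a boundary arc.**
Let `J = (a, b) ⊆ [-π, π]` be a nonempty open interval, `B₁(0)` the open unit disk and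
`A = {z : |z| = 1, arg z ∈ J}` the corresponding open arc of the unit circle. If `F` is
continuous on `B₁(0) ∪ A`, analytic on `B₁(0)`, and vanishes identically on `A`,
then `F ≡ 0` on `B₁(0) ∪ A`. -/
theorem disk_vanishing_on_boundary_arc
    (a b : ℝ) (ha : -Real.pi ≤ a) (hab : a < b) (hb : b ≤ Real.pi)
    (B A : Set ℂ)
    (hB : B = {z : ℂ | ‖z‖ < 1})
    (hA : A = {z : ℂ | ‖z‖ = 1 ∧ z.arg ∈ Set.Ioo a b})
    (F : ℂ → ℂ)
    (hF_cont : ContinuousOn F (B ∪ A))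
    (hF_anal : DifferentiableOn ℂ F B)
    (hF_zero : ∀ z ∈ A, F z = 0) :
    ∀ z ∈ B ∪ A, F z = 0 := by
  set V := slitPlane ∩ arg ⁻¹' Ioo a b
  have hB_ball : B = ball 0 1 := by ext; simp [hB]
  have hA_arc : A = V ∩ sphere 0 1 := by
    ext z
    simp only [hA, V, mem_ofPred_eq, mem_inter_iff, mem_preimage, mem_sphere_zero_iff_norm,
      mem_slitPlane_iff_arg]
    constructor
    · rintro ⟨hz, hz_arg⟩
      exact ⟨⟨⟨(hz_arg.2.trans_le hb).ne, by rintro rfl; simp at hz⟩, hz_arg⟩, hz⟩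
    · rintro ⟨⟨_, hz_arg⟩, hz⟩
      exact ⟨hz, hz_arg⟩
  subst hB_ball hA_arc
  have hθ : (a + b) / 2 ∈ Ioo a b := ⟨by linarith, by linarith⟩
  have hF_ball := eqOn_zero_ball_of_eq_zero_on_sphere_inter
    (continuousOn_arg.isOpen_inter_preimage isOpen_slitPlane isOpen_Ioo)
    ((starConvex_ball_union_slitPlane_inter_arg_preimage _).isPathConnected
      (Or.inl (mem_ball_self one_pos))).isConnected.isPreconnected
    (exists_mem_slitPlane_inter_arg_preimage_one_lt_norm hθ ⟨by linarith, by linarith⟩)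
    hF_cont hF_anal hF_zero
  rintro z (hz | hz)
  exacts [hF_ball hz, hF_zero z hz]
end

section
/- Let s > 1/2 and let f : 𝕊¹ → ℝ be a continuous real-valued function with f ∈ H^s(𝕊¹), and let g : 𝕊¹ → ℝ be the continuous representative of the periodic Hilbert transform ℋf. If there exists a nonempty open arc A ⊆ 𝕊¹ such that f(x) = 0 and g(x) = 0 for all x ∈ A, then f(x) = 0 for all x ∈ 𝕊¹. -/
/-!
Put `F = f + i g`. Its Fourier coefficients are `(1 + sgn n) f̂(n)`: they vanish for `n < 0`, and
they are absolutely summable because `s > 1/2` (AM–GM against the summable weight `(1 + n²)^(-s)`).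
So `F(t) = Φ(e^{2πit})` for the power series `Φ(z) = ∑ F̂(n) zⁿ`, holomorphic in the unit disc and
continuous up to the circle, and `Φ` vanishes on an arc. Rotating the arc by the `N`-th roots of
unity for `N` large covers the circle, so `∏_{ω^N = 1} Φ(ωz)` vanishes on the circle, hence on the
disc by the maximum principle. One factor then vanishes near `0`, so `Φ ≡ 0` by the identity
theorem, and `f = Re F ≡ 0`.
-/

open MeasureTheory Complex Filter Topology

noncomputable section

/-- The `n`-th Fourier coefficient of a `1`-periodic function `f : ℝ → ℂ` (viewed as a
function on `𝕊¹ = ℝ/ℤ`) : `f̂(n) = ∫₀¹ f(x) e^{-2πinx} dx`. -/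
def fourierCoefP (f : ℝ → ℂ) (n : ℤ) : ℂ :=
  ∫ x in (0 : ℝ)..1, Complex.exp (-2 * Real.pi * Complex.I * n * x) * f x

/-- `f ∈ H^s(𝕊¹)` for a `1`-periodic `f : ℝ → ℂ` : `∑ₙ (1+n²)^s |f̂(n)|² < ∞`. -/
def MemHsP (s : ℝ) (f : ℝ → ℂ) : Prop :=
  Summable fun n : ℤ => (1 + (n : ℝ) ^ 2) ^ s * ‖fourierCoefP f n‖ ^ 2

/-- `HasPeriodicHilbertTransform f h` : the `1`-periodic function `h` has Fourier
coefficients `ĥ(n) = -i · sgn(n) · f̂(n)`, i.e. `h` represents the periodic Hilbert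
transform `ℋf` of the `1`-periodic function `f`. -/
def HasPeriodicHilbertTransform (f h : ℝ → ℂ) : Prop :=
  ∀ n : ℤ, fourierCoefP h n = -Complex.I * (Int.sign n : ℂ) * fourierCoefP f n

open Metric Set Function
open scoped Real

theorem fourierCoefP_const_mul (c : ℂ) (u : ℝ → ℂ) (n : ℤ) :
    fourierCoefP (fun x => c * u x) n = c * fourierCoefP u n := by
  simp only [fourierCoefP, ← intervalIntegral.integral_const_mul, mul_left_comm c]

theorem fourierCoefP_add {u v : ℝ → ℂ} (hu : IntervalIntegrable u volume 0 1)
    (hv : IntervalIntegrable v volume 0 1) (n : ℤ) :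
    fourierCoefP (fun x => u x + v x) n = fourierCoefP u n + fourierCoefP v n := by
  have hexp : ContinuousOn (fun x : ℝ => Complex.exp (-2 * π * I * n * x)) (uIcc 0 1) := by
    fun_prop
  simp only [fourierCoefP, mul_add]
  exact intervalIntegral.integral_add (hu.continuousOn_mul hexp) (hv.continuousOn_mul hexp)

theorem Function.Periodic.continuous_lift {α β : Type*} [AddGroup α] [TopologicalSpace α]
    [TopologicalSpace β] {F : α → β} {c : α} (hper : Periodic F c) (hcont : Continuous F) :
    Continuous hper.lift :=
  continuous_quot_lift _ hcont

theorem Function.Periodic.fourierCoeff_lift {F : ℝ → ℂ} (hper : Periodic F 1) (n : ℤ) :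
    fourierCoeff (hper.lift : AddCircle (1 : ℝ) → ℂ) n = fourierCoefP F n := by
  rw [fourierCoeff_eq_intervalIntegral _ n 0, fourierCoefP, zero_add, div_one, one_smul]
  refine intervalIntegral.integral_congr fun x _ => ?_
  simp only [Periodic.lift_coe, fourier_coe_apply, smul_eq_mul]
  push_cast
  ring_nf

theorem hasSum_fourierCoefP_mul_exp {F : ℝ → ℂ} (hper : Periodic F 1) (hcont : Continuous F)
    (hsum : Summable (fourierCoefP F)) (t : ℝ) :
    HasSum (fun n : ℤ => fourierCoefP F n * Complex.exp (2 * π * I * n * t)) (F t) := by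
  let G : C(AddCircle (1 : ℝ), ℂ) := ⟨hper.lift, hper.continuous_lift hcont⟩
  have hG : fourierCoeff G = fourierCoefP F := funext hper.fourierCoeff_lift
  have h := has_pointwise_sum_fourier_series_of_summable (hG ▸ hsum) (t : AddCircle (1 : ℝ))
  simpa only [hper.fourierCoeff_lift, fourier_coe_apply, ofReal_one, div_one, smul_eq_mul, G,
    ContinuousMap.coe_mk, Periodic.lift_coe] using h

theorem summable_one_add_sq_rpow_neg {s : ℝ} (hs : 1 / 2 < s) :
    Summable fun n : ℤ => (1 + (n : ℝ) ^ 2) ^ (-s) := by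
  refine .of_norm_bounded_eventually (Real.summable_abs_int_rpow (by linarith : 1 < 2 * s)) ?_
  filter_upwards [(finite_singleton (0 : ℤ)).compl_mem_cofinite] with n hn
  have hn : (n : ℝ) ≠ 0 := by simpa using hn
  rw [Real.norm_of_nonneg (by positivity)]
  calc (1 + (n : ℝ) ^ 2) ^ (-s) ≤ ((n : ℝ) ^ 2) ^ (-s) :=
        Real.rpow_le_rpow_of_nonpos (by positivity) (by linarith) (by linarith)
    _ = |(n : ℝ)| ^ (-(2 * s)) := by
        rw [← sq_abs, ← Real.rpow_natCast, ← Real.rpow_mul (abs_nonneg _)]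
        norm_num

theorem MemHsP.summable_norm_fourierCoefP {s : ℝ} (hs : 1 / 2 < s) {f : ℝ → ℂ}
    (hf : MemHsP s f) : Summable fun n : ℤ => ‖fourierCoefP f n‖ := by
  refine .of_nonneg_of_le (fun n => norm_nonneg _) (fun n => ?_)
    ((hf.add (summable_one_add_sq_rpow_neg hs)).mul_left 2⁻¹)
  set w := 1 + (n : ℝ) ^ 2
  have hw : 0 < w := by positivity
  set A := w ^ (s / 2)
  have hA : 0 < A := by positivity
  have hAs : w ^ s = A ^ 2 := by
    rw [← Real.rpow_natCast, ← Real.rpow_mul hw.le]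
    norm_num
  rw [Real.rpow_neg hw.le, hAs]
  field_simp
  nlinarith [sq_nonneg (A ^ 2 * ‖fourierCoefP f n‖ - 1)]

theorem diffContOnCl_tsum_mul_pow {c : ℕ → ℂ} (hc : Summable fun n => ‖c n‖) :
    DiffContOnCl ℂ (fun z => ∑' n, c n * z ^ n) (ball 0 1) := by
  have hle : ∀ n, ∀ z ∈ closedBall (0 : ℂ) 1, ‖c n * z ^ n‖ ≤ ‖c n‖ := fun n z hz => by
    rw [norm_mul, norm_pow]
    exact mul_le_of_le_one_right (norm_nonneg _) (pow_le_one₀ (norm_nonneg z) (by simpa using hz))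
  refine ⟨differentiableOn_tsum_of_summable_norm hc (fun n => by fun_prop) isOpen_ball
    fun n z hz => hle n z (ball_subset_closedBall hz), ?_⟩
  rw [closure_ball 0 one_ne_zero]
  exact continuousOn_tsum (fun n => by fun_prop) hc hle

theorem AnalyticAt.exists_eventually_eq_zero_of_prod {𝕜 ι : Type*} [NontriviallyNormedField 𝕜]
    {s : Finset ι} {f : ι → 𝕜 → 𝕜} {z₀ : 𝕜} (hf : ∀ i ∈ s, AnalyticAt 𝕜 (f i) z₀)
    (h : ∀ᶠ z in 𝓝 z₀, ∏ i ∈ s, f i z = 0) : ∃ i ∈ s, ∀ᶠ z in 𝓝 z₀, f i z = 0 := by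
  by_contra hne
  have hne' : ∀ᶠ z in 𝓝[≠] z₀, ∀ i ∈ s, f i z ≠ 0 := (eventually_all_finset s).2 fun i hi =>
    (hf i hi).eventually_eq_zero_or_eventually_ne_zero.resolve_left fun h => hne ⟨i, hi, h⟩
  obtain ⟨z, hz, hz'⟩ := (hne'.and (nhdsWithin_le_nhds h)).exists
  exact Finset.prod_ne_zero_iff.2 hz hz'

theorem eqOn_zero_of_forall_mem_sphere_exists_mul_eq_zero {Φ : ℂ → ℂ}
    (hΦ : DiffContOnCl ℂ Φ (ball 0 1)) (S : Finset ℂ) (hS : ∀ w ∈ S, ‖w‖ = 1)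
    (hzero : ∀ z ∈ sphere (0 : ℂ) 1, ∃ w ∈ S, Φ (w * z) = 0) :
    EqOn Φ 0 (closedBall 0 1) := by
  have hrot : ∀ w ∈ S, DiffContOnCl ℂ (fun z => Φ (w * z)) (ball 0 1) := fun w hw =>
    hΦ.comp (differentiable_id.const_mul w).diffContOnCl fun z hz => by
      simpa [norm_mul, hS w hw] using hz
  have hprod : EqOn (fun z => ∏ w ∈ S, Φ (w * z)) 0 (closedBall 0 1) := by
    have hd : DiffContOnCl ℂ (fun z => ∏ w ∈ S, Φ (w * z)) (ball 0 1) :=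
      ⟨DifferentiableOn.fun_finsetProd fun w hw => (hrot w hw).1,
        continuousOn_finsetProd _ fun w hw => (hrot w hw).2⟩
    rw [← closure_ball 0 one_ne_zero]
    refine Complex.eqOn_closure_of_eqOn_frontier isBounded_ball hd diffContOnCl_const
      fun z hz => ?_
    rw [frontier_ball 0 one_ne_zero] at hz
    obtain ⟨w, hw, hwz⟩ := hzero z hz
    exact Finset.prod_eq_zero hw hwz
  obtain ⟨w, hw, hw0⟩ := AnalyticAt.exists_eventually_eq_zero_of_prod
    (fun w hw => (hrot w hw).1.analyticAt (ball_mem_nhds 0 one_pos))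
    (eventually_of_mem (closedBall_mem_nhds 0 one_pos) hprod)
  have hΦ0 : Φ =ᶠ[𝓝 0] 0 := by
    have hw₀ : w ≠ 0 := norm_ne_zero_iff.1 (by simp [hS w hw])
    have : Tendsto (fun z => w⁻¹ * z) (𝓝 0) (𝓝 0) := by
      simpa using (continuous_const_mul w⁻¹).tendsto 0
    filter_upwards [this.eventually hw0] with z hz
    rwa [mul_inv_cancel_left₀ hw₀] at hz
  have hball := (hΦ.1.analyticOnNhd isOpen_ball).eqOn_zero_of_preconnected_of_eventuallyEq_zero
    (convex_ball 0 1).isPreconnected (mem_ball_self one_pos) hΦ0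
  exact hball.of_subset_closure hΦ.continuousOn_ball continuousOn_const ball_subset_closedBall
    (closure_ball 0 one_ne_zero).ge

theorem eqOn_zero_of_forall_mem_Ioo_exp_mul_I_eq_zero {Φ : ℂ → ℂ}
    (hΦ : DiffContOnCl ℂ Φ (ball 0 1)) {a b : ℝ} (hab : a < b)
    (harc : ∀ θ ∈ Ioo a b, Φ (Complex.exp (θ * I)) = 0) : EqOn Φ 0 (closedBall 0 1) := by
  obtain ⟨N, hN⟩ := exists_nat_gt (2 * π / (b - a))
  have hN0 : 0 < N := by exact_mod_cast (div_pos Real.two_pi_pos (sub_pos.2 hab)).trans hN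
  set p := 2 * π / N
  have hp : 0 < p := by positivity
  have hpb : a + p < b := by
    linarith [(div_lt_comm₀ (sub_pos.2 hab) (Nat.cast_pos.2 hN0)).1 hN]
  refine eqOn_zero_of_forall_mem_sphere_exists_mul_eq_zero hΦ (Polynomial.nthRootsFinset N (1 : ℂ))
    (fun w hw => norm_eq_one_of_pow_eq_one ((Polynomial.mem_nthRootsFinset hN0 1).1 hw) hN0.ne')
    fun z hz => ?_
  obtain ⟨θ, rfl⟩ := (Complex.norm_eq_one_iff z).1 (by simpa using hz)
  -- rotating by `-j p` with `j = toIocDiv hp a θ` brings `θ` into `(a, a + p] ⊆ (a, b)`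
  refine ⟨Complex.exp (-(toIocDiv hp a θ • p : ℝ) * I), ?_, ?_⟩
  · have : (N : ℂ) ≠ 0 := by exact_mod_cast hN0.ne'
    rw [Polynomial.mem_nthRootsFinset hN0, ← Complex.exp_nat_mul]
    convert Complex.exp_int_mul_two_pi_mul_I (-toIocDiv hp a θ) using 2
    simp only [p, zsmul_eq_mul]
    push_cast
    field_simp
  · rw [← Complex.exp_add, ← add_mul, ← ofReal_neg, ← ofReal_add, neg_add_eq_sub,
      self_sub_toIocDiv_zsmul]
    exact harc _ ⟨(toIocMod_mem_Ioc hp a θ).1, (toIocMod_mem_Ioc hp a θ).2.trans_lt hpb⟩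

theorem eq_zero_of_fourierCoefP_neg_eq_zero_of_eqOn_Ioo {F : ℝ → ℂ} (hper : Periodic F 1)
    (hcont : Continuous F) (hsum : Summable fun n => ‖fourierCoefP F n‖)
    (hneg : ∀ n < 0, fourierCoefP F n = 0) {a b : ℝ} (hab : a < b) (hvan : EqOn F 0 (Ioo a b))
    (t : ℝ) : F t = 0 := by
  set Φ : ℂ → ℂ := fun z => ∑' n : ℕ, fourierCoefP F n * z ^ n
  have hF : ∀ t : ℝ, Φ (Complex.exp (↑(2 * π * t) * I)) = F t := fun t => by
    have h := (hasSum_fourierCoefP_mul_exp hper hcont hsum.of_norm t).nat_add_neg_add_one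
    have hneg' : ∀ n : ℕ, fourierCoefP F (-(n + 1)) = 0 := fun n => hneg _ (by omega)
    simp only [hneg', zero_mul, add_zero] at h
    refine (tsum_congr fun n => ?_).trans h.tsum_eq
    rw [← Complex.exp_nat_mul]
    push_cast
    ring_nf
  have hΦ : EqOn Φ 0 (closedBall 0 1) := eqOn_zero_of_forall_mem_Ioo_exp_mul_I_eq_zero
    (diffContOnCl_tsum_mul_pow (hsum.comp_injective Nat.cast_injective))
    (mul_lt_mul_of_pos_left hab Real.two_pi_pos) fun θ hθ => by
      have hθ' : θ / (2 * π) ∈ Ioo a b :=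
        ⟨(lt_div_iff₀' Real.two_pi_pos).2 hθ.1, (div_lt_iff₀' Real.two_pi_pos).2 hθ.2⟩
      have h := hF (θ / (2 * π))
      rwa [mul_div_cancel₀ θ Real.two_pi_pos.ne', hvan hθ'] at h
  rw [← hF]
  exact hΦ (by rw [mem_closedBall, dist_zero_right, norm_exp_ofReal_mul_I])

/-- **Unique continuation for the periodic Hilbert transform.** Let `s > 1/2`, let
`f ∈ H^s(𝕊¹)` be real valued and continuous (as a `1`-periodic function on `ℝ`), and let `g`
be the continuous representative of its periodic Hilbert transform `ℋf`. If `f` and `g` both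
vanish on a nonempty open arc, corresponding to the interval `(a, b)`, then `f ≡ 0`. -/
theorem periodic_hilbert_transform_unique_continuation
    (s : ℝ) (hs : 1 / 2 < s) (f g : ℝ → ℝ)
    (hf_per : Function.Periodic f 1) (hg_per : Function.Periodic g 1)
    (hf_cont : Continuous f) (hg_cont : Continuous g)
    (hfs : MemHsP s fun x => (f x : ℂ))
    (hfg : HasPeriodicHilbertTransform (fun x => (f x : ℂ)) fun x => (g x : ℂ))
    (a b : ℝ) (hab : a < b)
    (hvanish : ∀ x ∈ Set.Ioo a b, f x = 0 ∧ g x = 0) :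
    ∀ x : ℝ, f x = 0 := by
  let F : ℝ → ℂ := fun x => (f x : ℂ) + I * g x
  have hcoef (n : ℤ) :
      fourierCoefP F n = (1 + Int.sign n) * fourierCoefP (fun x => (f x : ℂ)) n := by
    have hfc : Continuous fun x => (f x : ℂ) := by fun_prop
    have hgc : Continuous fun x => I * g x := by fun_prop
    rw [fourierCoefP_add (hfc.intervalIntegrable 0 1) (hgc.intervalIntegrable 0 1),
      fourierCoefP_const_mul, hfg n]
    linear_combination (-(Int.sign n : ℂ) * fourierCoefP (fun x => (f x : ℂ)) n) * I_sq
  have hsum : Summable fun n => ‖fourierCoefP F n‖ := by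
    refine .of_nonneg_of_le (fun n => norm_nonneg _) (fun n => ?_)
      ((hfs.summable_norm_fourierCoefP hs).mul_left 2)
    rw [hcoef, norm_mul]
    gcongr
    rcases n.sign_trichotomy with h | h | h <;> norm_num [h]
  have hneg (n : ℤ) (hn : n < 0) : fourierCoefP F n = 0 := by
    simp [hcoef, Int.sign_eq_neg_one_of_neg hn]
  intro x
  have hFx : F x = 0 := eq_zero_of_fourierCoefP_neg_eq_zero_of_eqOn_Ioo
    (fun t => by simp [F, hf_per t, hg_per t]) (by fun_prop) hsum hneg hab
    (fun t ht => by simp [F, hvanish t ht]) x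
  simpa [F] using congrArg re hFx
end
end

section
/- Let δ > 0 and let g : ℝ → ℂ be a measurable function such that g is integrable and, for every y ∈ (0, 2δ), the function ξ ↦ g(ξ)·e^{-2πyξ} is integrable. Then the function F(z) = ∫_ℝ e^{2πizξ} g(ξ) dξ is continuous on the closed-below strip {z ∈ ℂ : 0 ≤ Im z < 2δ} and analytic (complex differentiable) on the open strip {z ∈ ℂ : 0 < Im z < 2δ}. -/
/-!
For `a ≤ Im z ≤ b` we have `|e^{2πizξ}| = e^{-2π Im z ξ} ≤ e^{-2πaξ} + e^{-2πbξ}`, so integrability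
of `g(ξ)e^{-2πyξ}` at the two exponents `y = a, b` dominates the integrand on the whole closed strip
and dominated convergence gives continuity there. On the open strip the `z`-derivative
`2πiξ e^{2πizξ} g(ξ)` obeys the same kind of bound, since `|ξ|` is absorbed by
`e^{±2πεξ}` at the price of shrinking the strip by `ε`; differentiation under the integral sign then
gives holomorphy. Integrability of `g` itself is the case `a = 0`.
-/

open MeasureTheory Complex Topology

open scoped Real

namespace Real

theorem exp_mul_le_exp_mul_add_exp_mul {a b t : ℝ} (ht : t ∈ Set.Icc a b) (x : ℝ) :
    exp (t * x) ≤ exp (a * x) + exp (b * x) := by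
  rcases le_total 0 x with hx | hx
  · have : exp (t * x) ≤ exp (b * x) := exp_le_exp.2 (mul_le_mul_of_nonneg_right ht.2 hx)
    linarith [exp_pos (a * x)]
  · have : exp (t * x) ≤ exp (a * x) := exp_le_exp.2 (mul_le_mul_of_nonpos_right ht.1 hx)
    linarith [exp_pos (b * x)]

-- `ε |x| ≤ exp (ε |x|)`, and `exp (ε |x| + t x)` is `exp (s x)` for `s = t ± ε ∈ [a, b]`.
theorem abs_mul_exp_mul_le {a b t ε : ℝ} (hε : 0 < ε) (ha : a ≤ t - ε) (hb : t + ε ≤ b)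
    (x : ℝ) : |x| * exp (t * x) ≤ ε⁻¹ * (exp (a * x) + exp (b * x)) := by
  have hlin : ε * |x| ≤ exp (ε * |x|) := by linarith [add_one_le_exp (ε * |x|)]
  have hshift : exp (ε * |x| + t * x) ≤ exp (a * x) + exp (b * x) := by
    rcases abs_cases x with ⟨hx, -⟩ | ⟨hx, -⟩
    · rw [hx, ← add_mul]
      exact exp_mul_le_exp_mul_add_exp_mul ⟨by linarith, by linarith⟩ x
    · rw [hx, show ε * -x + t * x = (t - ε) * x by ring]
      exact exp_mul_le_exp_mul_add_exp_mul ⟨by linarith, by linarith⟩ x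
  calc |x| * exp (t * x) = ε⁻¹ * (ε * |x| * exp (t * x)) := by field_simp
    _ ≤ ε⁻¹ * (exp (ε * |x|) * exp (t * x)) := by gcongr
    _ ≤ ε⁻¹ * (exp (a * x) + exp (b * x)) := by rw [← exp_add]; gcongr

end Real

noncomputable def fourierLaplace (g : ℝ → ℂ) (z : ℂ) : ℂ :=
  ∫ ξ : ℝ, cexp (2 * π * I * z * ξ) * g ξ

theorem norm_cexp_two_pi_I_mul (z : ℂ) (ξ : ℝ) :
    ‖cexp (2 * π * I * z * ξ)‖ = Real.exp (z.im * -(2 * π * ξ)) := by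
  rw [norm_exp]
  congr 1
  simp only [mul_re, mul_im, ofReal_re, ofReal_im, re_ofNat, im_ofNat, I_re, I_im]
  ring

theorem norm_mul_exp_neg (g : ℝ → ℂ) (y ξ : ℝ) :
    ‖g ξ * (Real.exp (-(2 * π * y * ξ)) : ℂ)‖ = Real.exp (y * -(2 * π * ξ)) * ‖g ξ‖ := by
  rw [norm_mul, norm_real, Real.norm_of_nonneg (Real.exp_pos _).le, mul_comm]
  congr 2
  ring

section Strip

variable {g : ℝ → ℂ} {a b : ℝ}

theorem norm_cexp_mul_le {z : ℂ} (hz : z.im ∈ Set.Icc a b) (ξ : ℝ) :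
    ‖cexp (2 * π * I * z * ξ) * g ξ‖ ≤
      ‖g ξ * (Real.exp (-(2 * π * a * ξ)) : ℂ)‖ + ‖g ξ * (Real.exp (-(2 * π * b * ξ)) : ℂ)‖ := by
  rw [norm_mul, norm_cexp_two_pi_I_mul, norm_mul_exp_neg, norm_mul_exp_neg, ← add_mul]
  gcongr
  exact Real.exp_mul_le_exp_mul_add_exp_mul hz _

theorem norm_deriv_cexp_mul_le {z : ℂ} {ε : ℝ} (hε : 0 < ε) (ha : a ≤ z.im - ε)
    (hb : z.im + ε ≤ b) (ξ : ℝ) :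
    ‖2 * π * I * ξ * cexp (2 * π * I * z * ξ) * g ξ‖ ≤
      ε⁻¹ * (‖g ξ * (Real.exp (-(2 * π * a * ξ)) : ℂ)‖ +
        ‖g ξ * (Real.exp (-(2 * π * b * ξ)) : ℂ)‖) := by
  have hfactor : ‖2 * π * I * (ξ : ℂ)‖ = |-(2 * π * ξ)| := by
    simp [abs_mul, abs_of_pos Real.pi_pos]
  rw [norm_mul, norm_mul, norm_cexp_two_pi_I_mul, norm_mul_exp_neg, norm_mul_exp_neg,
    ← add_mul, hfactor, ← mul_assoc]
  exact mul_le_mul_of_nonneg_right (Real.abs_mul_exp_mul_le hε ha hb _) (norm_nonneg _)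

theorem aestronglyMeasurable_cexp_mul (hg : AEStronglyMeasurable g) (z : ℂ) :
    AEStronglyMeasurable fun ξ : ℝ => cexp (2 * π * I * z * ξ) * g ξ :=
  (Continuous.aestronglyMeasurable (by fun_prop)).mul hg

theorem continuousOn_fourierLaplace (hg : AEStronglyMeasurable g)
    (ha : Integrable fun ξ : ℝ => g ξ * (Real.exp (-(2 * π * a * ξ)) : ℂ))
    (hb : Integrable fun ξ : ℝ => g ξ * (Real.exp (-(2 * π * b * ξ)) : ℂ)) :
    ContinuousOn (fourierLaplace g) (im ⁻¹' Set.Icc a b) :=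
  continuousOn_of_dominated (fun z _ => aestronglyMeasurable_cexp_mul hg z)
    (fun _ hz => ae_of_all _ (norm_cexp_mul_le hz)) (ha.norm.add hb.norm)
    (ae_of_all _ fun _ => Continuous.continuousOn (by fun_prop))

theorem differentiableOn_fourierLaplace (hg : AEStronglyMeasurable g)
    (ha : Integrable fun ξ : ℝ => g ξ * (Real.exp (-(2 * π * a * ξ)) : ℂ))
    (hb : Integrable fun ξ : ℝ => g ξ * (Real.exp (-(2 * π * b * ξ)) : ℂ)) :
    DifferentiableOn ℂ (fourierLaplace g) (im ⁻¹' Set.Ioo a b) := by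
  rintro z₀ ⟨hz₀a, hz₀b⟩
  obtain ⟨ε, hε, hεa, hεb⟩ : ∃ ε > 0, a + 2 * ε ≤ z₀.im ∧ z₀.im + 2 * ε ≤ b :=
    ⟨min (z₀.im - a) (b - z₀.im) / 2, by positivity,
      by linarith [min_le_left (z₀.im - a) (b - z₀.im)],
      by linarith [min_le_right (z₀.im - a) (b - z₀.im)]⟩
  have him : ∀ z ∈ Metric.ball z₀ ε, a ≤ z.im - ε ∧ z.im + ε ≤ b := by
    intro z hz
    have hclose : |z.im - z₀.im| < ε :=
      (abs_im_le_norm (z - z₀)).trans_lt (by simpa [dist_eq] using hz)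
    constructor <;> linarith [abs_lt.1 hclose]
  have hderiv := hasDerivAt_integral_of_dominated_loc_of_deriv_le
    (F' := fun z ξ => 2 * π * I * ξ * cexp (2 * π * I * z * ξ) * g ξ)
    (Metric.ball_mem_nhds z₀ hε) (.of_forall (aestronglyMeasurable_cexp_mul hg))
    ((ha.norm.add hb.norm).mono' (aestronglyMeasurable_cexp_mul hg z₀)
      (ae_of_all _ (norm_cexp_mul_le ⟨hz₀a.le, hz₀b.le⟩)))
    ((Continuous.aestronglyMeasurable (by fun_prop)).mul hg)
    (ae_of_all _ fun ξ z hz => norm_deriv_cexp_mul_le hε (him z hz).1 (him z hz).2 ξ)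
    ((ha.norm.add hb.norm).const_mul ε⁻¹)
    (ae_of_all _ fun ξ z _ =>
      ((((hasDerivAt_id' z).const_mul (2 * π * I)).mul_const (ξ : ℂ)).cexp.mul_const
        (g ξ)).congr_deriv (by ring))
  exact hderiv.2.differentiableAt.differentiableWithinAt

end Strip

theorem fourier_laplace_continuous_and_analytic_on_strip_general
    (δ : ℝ) (g : ℝ → ℂ)
    (hg_int : Integrable g)
    (hg_int' : ∀ y ∈ Set.Ioo (0 : ℝ) (2 * δ),
      Integrable fun ξ : ℝ => g ξ * (Real.exp (-(2 * Real.pi * y * ξ)) : ℂ)) :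
    ContinuousOn (fun z : ℂ => ∫ ξ : ℝ, Complex.exp (2 * Real.pi * Complex.I * z * ξ) * g ξ)
      {z : ℂ | 0 ≤ z.im ∧ z.im < 2 * δ} ∧
    DifferentiableOn ℂ (fun z : ℂ => ∫ ξ : ℝ, Complex.exp (2 * Real.pi * Complex.I * z * ξ) * g ξ)
      {z : ℂ | 0 < z.im ∧ z.im < 2 * δ} := by
  have hg_int₀ : Integrable fun ξ : ℝ => g ξ * (Real.exp (-(2 * π * 0 * ξ)) : ℂ) := by
    simpa using hg_int
  have hg := hg_int.aestronglyMeasurable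
  constructor
  · rintro z₀ ⟨hz₀, hz₀δ⟩
    obtain ⟨b, hz₀b, hbδ⟩ := exists_between hz₀δ
    refine ((continuousOn_fourierLaplace hg hg_int₀ (hg_int' b ⟨hz₀.trans_lt hz₀b, hbδ⟩)) z₀
      ⟨hz₀, hz₀b.le⟩).mono_of_mem_nhdsWithin
      (mem_nhdsWithin.2 ⟨im ⁻¹' Set.Iio b, isOpen_Iio.preimage continuous_im, hz₀b, ?_⟩)
    rintro z ⟨hzb, hz, -⟩
    exact ⟨hz, hzb.le⟩
  · rintro z₀ ⟨hz₀, hz₀δ⟩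
    obtain ⟨a, ha, haz₀⟩ := exists_between hz₀
    obtain ⟨b, hz₀b, hbδ⟩ := exists_between hz₀δ
    have hstrip : im ⁻¹' Set.Ioo a b ∈ 𝓝 z₀ :=
      (isOpen_Ioo.preimage continuous_im).mem_nhds ⟨haz₀, hz₀b⟩
    exact ((differentiableOn_fourierLaplace hg (hg_int' a ⟨ha, haz₀.trans hz₀δ⟩)
      (hg_int' b ⟨hz₀.trans hz₀b, hbδ⟩)).differentiableAt hstrip).differentiableWithinAt

/-- **Analyticity of the Fourier–Laplace integral on a strip.** Let `δ > 0` and let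
`g : ℝ → ℂ` be measurable and integrable, with `ξ ↦ g(ξ)e^{-2πyξ}` integrable for every
`y ∈ (0, 2δ)`. Then `F(z) = ∫ e^{2πizξ} g(ξ) dξ` is continuous on the half-open strip
`{0 ≤ Im z < 2δ}` and analytic on the open strip `{0 < Im z < 2δ}`. -/
theorem fourier_laplace_continuous_and_analytic_on_strip
    (δ : ℝ) (hδ : 0 < δ) (g : ℝ → ℂ)
    (hg_meas : Measurable g) (hg_int : Integrable g)
    (hg_int' : ∀ y ∈ Set.Ioo (0 : ℝ) (2 * δ),
      Integrable fun ξ : ℝ => g ξ * (Real.exp (-(2 * Real.pi * y * ξ)) : ℂ)) :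
    ContinuousOn (fun z : ℂ => ∫ ξ : ℝ, Complex.exp (2 * Real.pi * Complex.I * z * ξ) * g ξ)
      {z : ℂ | 0 ≤ z.im ∧ z.im < 2 * δ} ∧
    DifferentiableOn ℂ (fun z : ℂ => ∫ ξ : ℝ, Complex.exp (2 * Real.pi * Complex.I * z * ξ) * g ξ)
      {z : ℂ | 0 < z.im ∧ z.im < 2 * δ} :=
  fourier_laplace_continuous_and_analytic_on_strip_general δ g hg_int hg_int'
end
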